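/- Inversion of the pruning coefficients: for all positive integers μ and ρ, Σ_{ν=ρ}^{μ} C(μ, ν) · Ĉ(ν, ρ) equals 1 if μ = ρ and 0 otherwise, where C(μ, ν) = (ν/μ) · [z^{μ−ν}] exp(μ s P(z)) ∈ R and Ĉ(ν, ρ) = (ρ/ν) · [z^{ν−ρ}] ( (1 − s z P′(z)) · exp(−ρ s P(z)) ) ∈ R (both vanish when the second index exceeds the first, so the sum is finite). -/

import Mathlib

open scoped Classical

noncomputable section

/-- The coefficient ring `R = ℚ[s, q_1, …, q_d]`, with `s` the variable indexed by `none`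
and `q_l` the variable indexed by `some (l-1)`. -/
abbrev HurR (d : ℕ) : Type := MvPolynomial (Option (Fin d)) ℚ

/-- The variable `s`. -/
def sVar (d : ℕ) : HurR d := MvPolynomial.X none

/-- `qVar d l` is the variable `q_l` for `1 ≤ l ≤ d`, and `0` otherwise. -/
def qVar (d : ℕ) (l : ℕ) : HurR d :=
  if h : 0 < l ∧ l ≤ d then MvPolynomial.X (some ⟨l - 1, by omega⟩) else 0

/-- The number of cycles of a permutation, counting fixed points as cycles of length 1. -/
def cycleCount {G : Type*} [Fintype G] [DecidableEq G] (σ : Equiv.Perm G) : ℕ :=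
  Multiset.card σ.cycleType + (Fintype.card G - σ.support.card)

/-- The monomial `q_{λ_1} ⋯ q_{λ_ℓ}` attached to the full cycle type `(λ_1, …, λ_ℓ)` of a
permutation (fixed points counting as cycles of length 1, each contributing `q_1`). -/
def cycleWeight (d : ℕ) {G : Type*} [Fintype G] [DecidableEq G] (σ : Equiv.Perm G) : HurR d :=
  (σ.cycleType.map (qVar d)).prod * qVar d 1 ^ (Fintype.card G - σ.support.card)

/-- The length of the cycle of `σ` containing `x`. -/
def cycleLen {G : Type*} [Fintype G] [DecidableEq G] (σ : Equiv.Perm G) (x : G) : ℕ :=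
  (Finset.univ.filter fun y => σ.SameCycle x y).card

/-- The double Hurwitz number `DH_{g,n}(μ)`, for a family `μ` of positive integers indexed by a
finite type `ι` with `n = #ι`: the weighted count of tuples `(τ_0, τ_1, …, τ_m)` of permutations
of a set of cardinality `N = Σ μ_i` such that `τ_1, …, τ_m` are transpositions,
`τ_0 τ_1 ⋯ τ_m = ρ` for a fixed permutation `ρ` with `n` labelled cycles of lengths `μ_i`, the
subgroup generated acts transitively, every cycle of `τ_0` has length at most `d`, and
`m = 2g - 2 + n + ℓ` with `ℓ` the number of cycles of `τ_0`; each such tuple is weighted by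
`s^m q_{λ_1} ⋯ q_{λ_ℓ} / (m! μ_1 ⋯ μ_n)` where `(λ_1, …, λ_ℓ)` is the cycle type of `τ_0`.
By convention `DH = 0` for `g < 0`. -/
def DH (d : ℕ) (g : ℤ) {ι : Type} [Fintype ι] [DecidableEq ι] (μ : ι → ℕ) : HurR d :=
  if 0 ≤ g then
    ∑ m ∈ Finset.range ((2 * g).toNat + Fintype.card ι + (∑ i, μ i) + 1),
      ∑ τ : Fin (m + 1) → Equiv.Perm (Σ i, Fin (μ i)),
        if (∀ i, i ≠ 0 → (τ i).IsSwap) ∧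
            (List.ofFn τ).prod = Equiv.sigmaCongrRight (fun i => finRotate (μ i)) ∧
            (∀ x y : (Σ i, Fin (μ i)), ∃ π ∈ Subgroup.closure (Set.range τ), π x = y) ∧
            (∀ x, cycleLen (τ 0) x ≤ d) ∧
            (m : ℤ) = 2 * g - 2 + Fintype.card ι + cycleCount (τ 0)
        then ((m.factorial * ∏ i, μ i : ℚ))⁻¹ • (sVar d ^ m * cycleWeight d (τ 0))
        else 0
  else 0

/-- The formal exponential of a power series (intended for series with zero constant term). -/
def expPS {A : Type*} [CommRing A] [Algebra ℚ A] (f : PowerSeries A) : PowerSeries A :=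
  PowerSeries.mk fun n =>
    ∑ k ∈ Finset.range (n + 1), (k.factorial : ℚ)⁻¹ • PowerSeries.coeff n (f ^ k)

/-- The polynomial `P(z) = q_1 z + q_2 z² + ⋯ + q_d z^d` as a power series. -/
def Pser (d : ℕ) : PowerSeries (HurR d) := PowerSeries.mk fun n => qVar d n

/-- The formal derivative of a power series. -/
def dz {A : Type*} [CommSemiring A] (f : PowerSeries A) : PowerSeries A :=
  PowerSeries.mk fun n => ((n + 1 : ℕ) : A) * PowerSeries.coeff (n + 1) f

/-- The spectral curve coordinate `X(z) = z exp(-s P(z))`. -/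
def Xser (d : ℕ) : PowerSeries (HurR d) :=
  PowerSeries.X * expPS (-(PowerSeries.C (sVar d) * Pser d))

/-- The power series `1 - s z P'(z)`. -/
def oneMinus (d : ℕ) : PowerSeries (HurR d) :=
  1 - PowerSeries.C (sVar d) * PowerSeries.X * dz (Pser d)

/-- The inverse `(1 - s z P'(z))⁻¹` in `R[[z]]`. -/
def Wser (d : ℕ) : PowerSeries (HurR d) := PowerSeries.invOfUnit (oneMinus d) 1

/-- The one-variable series `f(z)`, placed in the `i`-th variable of an `n`-variable
formal power series ring. -/
def embVar {A : Type*} [CommRing A] {n : ℕ} (i : Fin n) (f : PowerSeries A) :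
    MvPowerSeries (Fin n) A :=
  fun e => if ∀ j, j ≠ i → e j = 0 then PowerSeries.coeff (e i) f else 0

/-- The formal partial derivative `∂/∂z_i` of a multivariate power series. -/
def pdz {A : Type*} [CommRing A] {n : ℕ} (i : Fin n) (f : MvPowerSeries (Fin n) A) :
    MvPowerSeries (Fin n) A :=
  fun e => ((e i + 1 : ℕ) : A) * MvPowerSeries.coeff (e + Finsupp.single i 1) f

/-- The derivative `∂/∂s`, applied coefficientwise to a power series over `R = ℚ[s,q]`. -/
def sderiv (d : ℕ) {n : ℕ} (f : MvPowerSeries (Fin n) (HurR d)) :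
    MvPowerSeries (Fin n) (HurR d) :=
  fun e => MvPolynomial.pderiv none (MvPowerSeries.coeff e f)

/-- The formal logarithm `log(1 + u) = Σ_{k ≥ 1} (-1)^{k+1} u^k / k` (intended for series `u`
with zero constant term). -/
def mvLog1p {A : Type*} [CommRing A] [Algebra ℚ A] {n : ℕ} (u : MvPowerSeries (Fin n) A) :
    MvPowerSeries (Fin n) A :=
  fun e => ∑ k ∈ Finset.Icc 1 (e.sum fun _ v => v),
    ((-1 : ℚ) ^ (k + 1) / k) • MvPowerSeries.coeff e (u ^ k)

/-- The free energy `F_{g,n}`, as a power series in the variables indexed by a subset `A` of the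
`n` available variables (so that `n` may exceed the number of arguments of `F`). -/
def Fon (d : ℕ) (g : ℤ) {n : ℕ} (A : Finset (Fin n)) : MvPowerSeries (Fin n) (HurR d) :=
  fun e => if (∀ j ∈ A, 0 < e j) ∧ (∀ j ∉ A, e j = 0) then DH d g (fun k : ↥A => e k.val) else 0

/-- The composite series `F_{g,1}(X(z))`. -/
def Fc1 (d : ℕ) (g : ℤ) : PowerSeries (HurR d) :=
  PowerSeries.mk fun ν => ∑ m ∈ Finset.Icc 1 ν,
    DH d g (fun _ : Fin 1 => m) * PowerSeries.coeff ν (Xser d ^ m)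

/-- The composite series `F_{g,n}(X(z_1), …, X(z_n))`. -/
def FcFull (d : ℕ) (g : ℤ) (n : ℕ) : MvPowerSeries (Fin n) (HurR d) :=
  fun e => ∑ μ ∈ Fintype.piFinset (fun i => Finset.Icc 1 (e i)),
    DH d g μ * ∏ i, PowerSeries.coeff (e i) (Xser d ^ μ i)

/-- The composite series `F_{g,#A}((X(z_k))_{k ∈ A})`, in the variables indexed by the
subset `A` of the `n` available variables. -/
def FcOn (d : ℕ) (g : ℤ) {n : ℕ} (A : Finset (Fin n)) : MvPowerSeries (Fin n) (HurR d) :=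
  fun e => if ∀ j ∉ A, e j = 0 then
      ∑ μ ∈ Fintype.piFinset (fun k : ↥A => Finset.Icc 1 (e k.val)),
        DH d g μ * ∏ k : ↥A, PowerSeries.coeff (e k.val) (Xser d ^ μ k)
    else 0

/-- The coefficient `[z^k] f` of a power series, for `k : ℤ`, with the convention that it
vanishes for `k < 0`. -/
def coeffZ {A : Type*} [CommRing A] (k : ℤ) (f : PowerSeries A) : A :=
  if 0 ≤ k then PowerSeries.coeff k.toNat f else 0

/-- The pruning coefficient `Ĉ(ν, μ) = (μ/ν) [z^{ν-μ}] ((1 - s z P'(z)) exp(-μ s P(z)))`. -/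
def Chat (d : ℕ) (ν μ : ℕ) : HurR d :=
  ((μ : ℚ) / ν) • coeffZ ((ν : ℤ) - μ)
    (oneMinus d * expPS (-(PowerSeries.C ((μ : HurR d) * sVar d) * Pser d)))

/-- The pruning coefficient `C(μ, ν) = (ν/μ) [z^{μ-ν}] exp(μ s P(z))`. -/
def Cco (d : ℕ) (μ ν : ℕ) : HurR d :=
  ((ν : ℚ) / μ) • coeffZ ((μ : ℤ) - ν)
    (expPS (PowerSeries.C ((μ : HurR d) * sVar d) * Pser d))

/-- The pruned double Hurwitz number
`PH_{g,n}(ν) = Σ_{μ ≤ ν} DH_{g,n}(μ) ∏_i Ĉ(ν_i, μ_i)`. -/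
def PH (d : ℕ) (g : ℤ) {n : ℕ} (ν : Fin n → ℕ) : HurR d :=
  ∑ μ ∈ Fintype.piFinset (fun i => Finset.Icc 1 (ν i)), DH d g μ * ∏ i, Chat d (ν i) (μ i)

section PruneHelpers

open PowerSeries

set_option linter.unusedSectionVars false

variable {A : Type*} [CommRing A] [Algebra ℚ A]

lemma dz_eq (f : PowerSeries A) : dz f = d⁄dX A f := by
  ext n; simp [dz, coeff_derivative, mul_comm]

lemma dz_mul (f g : PowerSeries A) : dz (f * g) = dz f * g + f * dz g := by
  simp [dz_eq, Derivation.leibniz]; ring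

lemma coeff_dz (f : PowerSeries A) (n : ℕ) :
    coeff n (dz f) = ((n + 1 : ℕ) : A) * coeff (n + 1) f := by
  simp [dz]

lemma dz_neg (f : PowerSeries A) : dz (-f) = -dz f := by
  ext n; simp [dz]

lemma dz_C_mul (a : A) (f : PowerSeries A) :
    dz (PowerSeries.C a * f) = PowerSeries.C a * dz f := by
  ext n; simp [dz, coeff_C_mul]; ring

lemma coeff_pow_eq_zero {g : PowerSeries A} (hg : constantCoeff g = 0)
    {n k : ℕ} (h : n < k) : coeff n (g ^ k) = 0 := by
  have : (X : PowerSeries A) ^ k ∣ g ^ k := pow_dvd_pow_of_dvd (X_dvd_iff.mpr hg) k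
  exact (X_pow_dvd_iff.mp this) n h

lemma coeff_mul_expPS (f g : PowerSeries A) (hg : constantCoeff g = 0) (n : ℕ) :
    coeff n (f * expPS g) =
      ∑ k ∈ Finset.range (n + 1), (k.factorial : ℚ)⁻¹ • coeff n (f * g ^ k) := by
  rw [coeff_mul]
  have key : ∀ p ∈ Finset.HasAntidiagonal.antidiagonal n, coeff p.1 f * coeff p.2 (expPS g)
      = ∑ k ∈ Finset.range (n+1), (k.factorial : ℚ)⁻¹ • (coeff p.1 f * coeff p.2 (g^k)) := by
    intro p hp
    have hp2 : p.2 ≤ n := Finset.HasAntidiagonal.antidiagonal.snd_le hp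
    have h2 : coeff p.2 (expPS g)
        = ∑ k ∈ Finset.range (n+1), (k.factorial : ℚ)⁻¹ • coeff p.2 (g^k) := by
      rw [expPS, coeff_mk]
      refine Finset.sum_subset (by intro x hx; simp at hx ⊢; omega) ?_
      intro x hx hx'
      simp only [Finset.mem_range, not_lt] at hx'
      rw [coeff_pow_eq_zero hg (by omega), smul_zero]
    rw [h2, Finset.mul_sum]
    simp [mul_smul_comm]
  rw [Finset.sum_congr rfl key, Finset.sum_comm]
  simp [coeff_mul, Finset.smul_sum]

lemma constantCoeff_expPS (g : PowerSeries A) : constantCoeff (expPS g) = 1 := by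
  rw [← coeff_zero_eq_constantCoeff_apply]
  simp [expPS, coeff_mk]

lemma dz_expPS (g : PowerSeries A) (hg : constantCoeff g = 0) :
    dz (expPS g) = dz g * expPS g := by
  ext n
  rw [coeff_mul_expPS _ _ hg, coeff_dz]
  have hexp : coeff (n+1) (expPS g)
      = ∑ k ∈ Finset.range (n+2), (k.factorial : ℚ)⁻¹ • coeff (n+1) (g^k) := by
    rw [expPS, coeff_mk]
  have hterm : ∀ k, coeff n (dz g * g ^ k)
      = ((k+1 : ℕ) : ℚ)⁻¹ • (((n+1 : ℕ) : A) * coeff (n+1) (g ^ (k+1))) := by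
    intro k
    have hd : dz (g ^ (k+1)) = (k+1) • (g ^ k * dz g) := by
      rw [dz_eq, dz_eq, Derivation.leibniz_pow]
      simp [smul_mul_assoc]
    have h1 : coeff n (dz (g ^ (k+1))) = ((n+1 : ℕ) : A) * coeff (n+1) (g ^ (k+1)) :=
      coeff_dz _ n
    rw [hd, map_nsmul] at h1
    rw [mul_comm (dz g), ← h1, ← Nat.cast_smul_eq_nsmul ℚ, smul_smul]
    simp [Nat.cast_add_one_ne_zero]
  rw [hexp, Finset.mul_sum]
  rw [Finset.sum_range_succ'
    (fun k => ((n+1:ℕ):A) * ((k.factorial : ℚ)⁻¹ • coeff (n+1) (g^k))) (n+1)]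
  simp only [hterm]
  simp only [pow_zero, Nat.factorial_zero, coeff_one, Nat.succ_ne_zero, if_false,
    smul_zero, mul_zero, add_zero, Nat.cast_one, inv_one, one_smul]
  refine Finset.sum_congr rfl fun k _ => ?_
  rw [smul_smul, mul_smul_comm]
  congr 1
  rw [Nat.factorial_succ]
  push_cast
  rw [mul_inv]
  ring

end PruneHelpers

section PruneMain

open PowerSeries

lemma constantCoeff_Pser (d : ℕ) : constantCoeff (Pser d) = 0 := by
  rw [← coeff_zero_eq_constantCoeff_apply]
  simp [Pser, qVar]

lemma constantCoeff_oneMinus (d : ℕ) : constantCoeff (oneMinus d) = 1 := by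
  simp [oneMinus]

lemma key_coeff_zero (d : ℕ) (c : ℕ) (hc : 0 < c) (a b : HurR d)
    (hab : a - b = (c : HurR d) * sVar d) :
    coeff c (expPS (PowerSeries.C a * Pser d) *
      (oneMinus d * expPS (-(PowerSeries.C b * Pser d)))) = 0 := by
  have hca : constantCoeff (PowerSeries.C a * Pser d) = 0 := by
    simp [constantCoeff_Pser]
  have hcb : constantCoeff (-(PowerSeries.C b * Pser d)) = 0 := by
    simp [constantCoeff_Pser]
  set F := expPS (PowerSeries.C a * Pser d) *
    expPS (-(PowerSeries.C b * Pser d)) with hF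
  have hgoal : expPS (PowerSeries.C a * Pser d) *
      (oneMinus d * expPS (-(PowerSeries.C b * Pser d))) = oneMinus d * F := by
    rw [hF]; ring
  rw [hgoal]
  have hdzF : dz F = PowerSeries.C ((c : HurR d) * sVar d) * (dz (Pser d) * F) := by
    rw [hF, dz_mul, dz_expPS _ hca, dz_expPS _ hcb, dz_neg, dz_C_mul, dz_C_mul, ← hab,
      map_sub]
    ring
  obtain ⟨j, hj⟩ : ∃ j, c = j + 1 := ⟨c - 1, by omega⟩
  have h1 : coeff c (oneMinus d * F) = coeff c F
      - coeff c (PowerSeries.C (sVar d) * PowerSeries.X * dz (Pser d) * F) := by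
    rw [oneMinus, sub_mul, one_mul, map_sub]
  have h2 : coeff c (PowerSeries.C (sVar d) * PowerSeries.X * dz (Pser d) * F)
      = sVar d * coeff j (dz (Pser d) * F) := by
    rw [show PowerSeries.C (sVar d) * PowerSeries.X * dz (Pser d) * F
        = PowerSeries.X * (PowerSeries.C (sVar d) * (dz (Pser d) * F)) by ring, hj,
      coeff_succ_X_mul, coeff_C_mul]
  have h3 : ((c : ℕ) : HurR d) * coeff c F
      = ((c : ℕ) : HurR d) * (sVar d * coeff j (dz (Pser d) * F)) := by
    have hA : coeff j (dz F) = ((j + 1 : ℕ) : HurR d) * coeff (j+1) F :=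
      coeff_dz F j
    rw [hdzF, coeff_C_mul, ← hj] at hA
    rw [← hA, hj]
    push_cast
    ring
  have hc0 : ((c : ℕ) : HurR d) ≠ 0 := Nat.cast_ne_zero.mpr (by omega)
  have h4 : coeff c F = sVar d * coeff j (dz (Pser d) * F) :=
    mul_left_cancel₀ hc0 h3
  rw [h1, h2, h4, sub_self]

end PruneMain


/-- Inversion of the pruning coefficients: for positive integers `μ` and `ρ`,
`Σ_{ν=ρ}^{μ} C(μ, ν) Ĉ(ν, ρ)` equals `1` if `μ = ρ` and `0` otherwise. -/
theorem pruning_coefficients_inverse (d : ℕ) (hd : 0 < d) (μ ρ : ℕ) (hμ : 0 < μ) (hρ : 0 < ρ) :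
    ∑ ν ∈ Finset.Icc ρ μ, Cco d μ ν * Chat d ν ρ = if μ = ρ then 1 else 0 := by
  classical
  by_cases hle : ρ ≤ μ
  swap
  · rw [Finset.Icc_eq_empty (by omega), Finset.sum_empty, if_neg (by omega)]
  have hP0 := constantCoeff_Pser d
  have hstep : ∑ ν ∈ Finset.Icc ρ μ, Cco d μ ν * Chat d ν ρ
      = ((ρ : ℚ) / μ) • PowerSeries.coeff (μ - ρ)
          (expPS (PowerSeries.C ((μ : HurR d) * sVar d) * Pser d) *
            (oneMinus d *
              expPS (-(PowerSeries.C ((ρ : HurR d) * sVar d) * Pser d)))) := by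
    have hterm : ∀ ν ∈ Finset.Icc ρ μ, Cco d μ ν * Chat d ν ρ
        = ((ρ : ℚ) / μ) •
          (PowerSeries.coeff (μ - ν)
              (expPS (PowerSeries.C ((μ : HurR d) * sVar d) * Pser d)) *
            PowerSeries.coeff (ν - ρ)
              (oneMinus d *
                expPS (-(PowerSeries.C ((ρ : HurR d) * sVar d) * Pser d)))) := by
      intro ν hν
      rw [Finset.mem_Icc] at hν
      have hν0 : (ν : ℚ) ≠ 0 := Nat.cast_ne_zero.mpr (by omega)
      have hμ0 : (μ : ℚ) ≠ 0 := Nat.cast_ne_zero.mpr (by omega)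
      rw [Cco, Chat, coeffZ, coeffZ, if_pos (by omega), if_pos (by omega),
        Int.toNat_sub, Int.toNat_sub, smul_mul_smul_comm]
      congr 1
      field_simp
    rw [Finset.sum_congr rfl hterm, ← Finset.smul_sum]
    congr 1
    rw [PowerSeries.coeff_mul, Finset.Nat.sum_antidiagonal_eq_sum_range_succ_mk]
    refine Finset.sum_nbij' (fun ν => μ - ν) (fun k => μ - k) ?_ ?_ ?_ ?_ ?_
    · intro ν hν; rw [Finset.mem_Icc] at hν; simp only [Finset.mem_range]; omega
    · intro k hk; rw [Finset.mem_range] at hk; simp only [Finset.mem_Icc]; omega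
    · intro ν hν; rw [Finset.mem_Icc] at hν; omega
    · intro k hk; rw [Finset.mem_range] at hk; omega
    · intro ν hν; rw [Finset.mem_Icc] at hν
      simp only []
      have hsub : ν - ρ = μ - ρ - (μ - ν) := by omega
      rw [hsub]
  rw [hstep]
  rcases eq_or_lt_of_le hle with heq | hlt
  · rw [if_pos heq.symm, heq]
    simp only [Nat.sub_self]
    rw [PowerSeries.coeff_zero_eq_constantCoeff_apply]
    have hμ0 : (μ : ℚ) ≠ 0 := Nat.cast_ne_zero.mpr (by omega)
    simp [constantCoeff_expPS, constantCoeff_oneMinus, div_self hμ0]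
  · rw [if_neg (by omega)]
    rw [key_coeff_zero d (μ - ρ) (by omega) _ _ (by rw [Nat.cast_sub hle]; push_cast; ring),
      smul_zero]
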